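/- For u(t) a bounded function on (0,∞) with Laplace transform g(s) = ∫_0^∞ e^{-st} u(t) dt that extends to a function rapidly decreasing in s along the positive real axis (i.e., g(s) = O(s^{-n}) for every n as s → ∞), with the specific form g(s,z) = (1/s)√(πz) e^{-z/2} I_{√(1/4+s)}(z/2), the function u(t,z) (the absorption probability) satisfies u(t,z) ≤ c_n t^n as t → 0+ for every n > 0. -/

import Mathlib

open MeasureTheory ProbabilityTheory Filter Set
open scoped ENNReal NNReal

noncomputable section

/-- Standard Brownian motion with respect to a measure `μ`. -/
structure IsBrownianMotion {Ω : Type*} {mΩ : MeasurableSpace Ω} (μ : Measure Ω)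
    (W : ℝ → Ω → ℝ) : Prop where
  meas : ∀ t, Measurable (W t)
  init : ∀ᵐ ω ∂μ, W 0 ω = 0
  cont : ∀ᵐ ω ∂μ, Continuous fun t => W t ω
  incr : ∀ s t : ℝ, 0 ≤ s → s ≤ t →
    μ.map (fun ω => W t ω - W s ω) = gaussianReal 0 (Real.toNNReal (t - s))
  indep : ∀ n : ℕ, ∀ u : ℕ → ℝ, Monotone u → (∀ i, 0 ≤ u i) →
    iIndepFun (m := fun _ : Fin n => (inferInstance : MeasurableSpace ℝ))
      (fun i : Fin n => fun ω => W (u (i + 1)) ω - W (u i) ω) μ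

/-- Riemann sum along dyadic partitions approximating the Itô integral `∫_0^t H dW`. -/
def itoSum {Ω : Type*} (H W : ℝ → Ω → ℝ) (t : ℝ) (n : ℕ) (ω : Ω) : ℝ :=
  ∑ k ∈ Finset.range (2 ^ n),
    H (t * k / 2 ^ n) ω * (W (t * (k + 1) / 2 ^ n) ω - W (t * k / 2 ^ n) ω)

/-- `I` is the Itô integral process `∫_0^t H dW`: the dyadic Riemann sums converge in
probability to `I t` for every `t ≥ 0`. -/
def IsItoIntegral {Ω : Type*} {mΩ : MeasurableSpace Ω} (μ : Measure Ω)
    (H W I : ℝ → Ω → ℝ) : Prop :=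
  ∀ t : ℝ, 0 ≤ t → TendstoInMeasure μ (fun n => itoSum H W t n) atTop (I t)

/-- `X` solves the SDE `dX_t = b(X_t) dt + σ(X_t) dW_t`, `X_0 = x₀`. -/
def SolvesSDE {Ω : Type*} {mΩ : MeasurableSpace Ω} (μ : Measure Ω)
    (W X : ℝ → Ω → ℝ) (b σ : ℝ → ℝ) (x₀ : ℝ) : Prop :=
  (∀ᵐ ω ∂μ, X 0 ω = x₀) ∧
  ∃ I : ℝ → Ω → ℝ, IsItoIntegral μ (fun t ω => σ (X t ω)) W I ∧
    ∀ t : ℝ, 0 ≤ t → ∀ᵐ ω ∂μ, X t ω = x₀ + (∫ s in (0:ℝ)..t, b (X s ω)) + I t ω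

/-- A process is a local martingale if there is a localizing sequence of stopping times. -/
def IsLocalMartingale {Ω : Type*} {mΩ : MeasurableSpace Ω} (μ : Measure Ω)
    (ℱ : Filtration ℝ mΩ) (X : ℝ → Ω → ℝ) : Prop :=
  ∃ τ : ℕ → Ω → ℝ, (∀ n, IsStoppingTime ℱ (fun ω => ((τ n ω : ℝ) : WithTop ℝ))) ∧
    (∀ᵐ ω ∂μ, Tendsto (fun n => τ n ω) atTop atTop) ∧
    ∀ n, Martingale (MeasureTheory.stoppedProcess X (fun ω => ((τ n ω : ℝ) : WithTop ℝ))) ℱ μ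

/-- A process is a (true) martingale on the time interval `[0, T₀]`. -/
def MartingaleOn {Ω : Type*} {mΩ : MeasurableSpace Ω} (μ : Measure Ω)
    (ℱ : Filtration ℝ mΩ) (X : ℝ → Ω → ℝ) (T₀ : ℝ) : Prop :=
  Adapted ℱ X ∧ (∀ t ∈ Set.Icc (0:ℝ) T₀, Integrable (X t) μ) ∧
  ∀ s t : ℝ, 0 ≤ s → s ≤ t → t ≤ T₀ → μ[X t | ℱ s] =ᵐ[μ] X s

/-- The cumulative distribution function of the standard normal distribution. -/
def stdNormalCDF (z : ℝ) : ℝ := ∫ x in Set.Iic z, gaussianPDFReal 0 1 x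

/-- The modified Bessel function of the second kind of imaginary order `iμ`,
via its real integral representation `K_{iμ}(γ) = ∫_0^∞ e^{-γ cosh t} cos(μ t) dt`. -/
def besselKi (m γ : ℝ) : ℝ :=
  ∫ t in Set.Ioi (0:ℝ), Real.exp (-γ * Real.cosh t) * Real.cos (m * t)

/-- The modified Bessel function of the first kind of real order `l`. -/
def besselI (l x : ℝ) : ℝ :=
  ∑' n : ℕ, (x / 2) ^ (2 * n) * (x / 2) ^ l / (n.factorial * Real.Gamma (n + l + 1))

/-- Kummer's confluent hypergeometric function `M(a, b, z) = ₁F₁(a; b; z)`. -/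
def kummerM (a b z : ℝ) : ℝ :=
  ∑' n : ℕ, ((∏ k ∈ Finset.range n, (a + k)) / (∏ k ∈ Finset.range n, (b + k)))
    * z ^ n / n.factorial

/-- The function `A_c(γ, τ)` from the SABR martingale defect formula. -/
def Ac (γ τ : ℝ) : ℝ :=
  Real.sqrt (2 * γ / Real.pi ^ 3) * Real.exp (-(γ + τ / 8)) *
    ∫ s in Set.Ioi (0:ℝ),
      (8 * s * Real.sinh (Real.pi * s) / (4 * s ^ 2 + 1)) * besselKi s γ *
        Real.exp (-s ^ 2 * τ / 2)

/-- `Y` solves the SDE `dY_t = b(Y_t) dt + σ(Y_t) dW_t`, `Y_0 = y₀`, up to the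
(possibly infinite) explosion time `ζ`. -/
def SolvesSDEUpTo {Ω : Type*} {mΩ : MeasurableSpace Ω} (μ : Measure Ω)
    (W Y : ℝ → Ω → ℝ) (b σ : ℝ → ℝ) (y₀ : ℝ) (ζ : Ω → ℝ≥0∞) : Prop :=
  (∀ᵐ ω ∂μ, Y 0 ω = y₀) ∧
  ∃ I : ℝ → Ω → ℝ,
    (∀ t : ℝ, 0 ≤ t →
      TendstoInMeasure (μ.restrict {ω | ENNReal.ofReal t < ζ ω})
        (fun n => itoSum (fun u ω => σ (Y u ω)) W t n) atTop (I t)) ∧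
    ∀ t : ℝ, 0 ≤ t → ∀ᵐ ω ∂μ.restrict {ω | ENNReal.ofReal t < ζ ω},
      Y t ω = y₀ + (∫ s in (0:ℝ)..t, b (Y s ω)) + I t ω

/-- The first hitting time of zero of a process, as an extended real number. -/
def hitZeroTime {Ω : Type*} (X : ℝ → Ω → ℝ) (ω : Ω) : ℝ≥0∞ :=
  ⨅ (s : {s : ℝ // 0 ≤ s ∧ X s ω = 0}), ENNReal.ofReal s.1

/-!
Because `u` is nonnegative and nondecreasing, restricting the Laplace integral at `s = 1/t`
to `(t, 2t]` gives `u t ≤ e² · g(1/t) / t`. Each term of the series of `I_ν(x)` is at most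
`(x/2)^ν / Γ(ν+1)` times the corresponding term of `exp ((x/2)²)`, and `Γ(ν+1)` eventually
exceeds `ν^M b^ν` for any `M`, `b`. With `ν = √(1/4 + 1/t) ≥ t^(-1/2)` this makes
`u t = O(tⁿ)` for every `n`.
-/

open Real
open scoped Nat Topology

namespace Real

lemma Gamma_add_one_le_Gamma_nat_add_add_one {ν : ℝ} (hν : 0 ≤ ν) (n : ℕ) :
    Gamma (ν + 1) ≤ Gamma (n + ν + 1) := by
  induction n with
  | zero => simp
  | succ n ih =>
    have hpos : 0 < (n : ℝ) + ν + 1 := by positivity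
    calc Gamma (ν + 1) ≤ Gamma (n + ν + 1) := ih
      _ ≤ ((n : ℝ) + ν + 1) * Gamma (n + ν + 1) :=
          le_mul_of_one_le_left (Gamma_pos_of_pos hpos).le (by linarith)
      _ = Gamma ((n + 1 : ℕ) + ν + 1) := by
          rw [← Gamma_add_one hpos.ne']; push_cast; ring_nf

lemma factorial_floor_le_Gamma_add_one {ν : ℝ} (hν : 1 ≤ ν) :
    (⌊ν⌋₊ ! : ℝ) ≤ Gamma (ν + 1) := by
  have hk : (1 : ℝ) ≤ ⌊ν⌋₊ := by exact_mod_cast Nat.le_floor (by exact_mod_cast hν)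
  rw [← Gamma_nat_eq_factorial]
  exact Gamma_strictMonoOn_Ici.monotoneOn (by simp only [mem_Ici]; linarith)
    (by simp only [mem_Ici]; linarith) (by linarith [Nat.floor_le (by linarith : (0 : ℝ) ≤ ν)])

/-- With `k = ⌊ν⌋₊`: `ν ^ M * b ^ ν ≤ (2 ^ M * b) ^ (k + 1) ≤ k ! ≤ Γ(ν + 1)`, the middle
step holding for large `k`. -/
lemma eventually_pow_mul_rpow_le_Gamma_add_one (M : ℕ) {b : ℝ} (hb : 1 ≤ b) :
    ∀ᶠ ν in atTop, ν ^ M * b ^ ν ≤ Gamma (ν + 1) := by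
  set c : ℝ := 2 ^ M * b
  have hfact : ∀ᶠ k : ℕ in atTop, c ^ (k + 1) ≤ k ! := by
    filter_upwards [((FloorSemiring.tendsto_pow_div_factorial_atTop c).const_mul c).eventually
      (eventually_le_nhds (by norm_num : c * 0 < 1))] with k hk
    rw [← mul_div_assoc, div_le_one (by positivity)] at hk
    rwa [pow_succ']
  filter_upwards [tendsto_nat_floor_atTop.eventually hfact, eventually_ge_atTop 1]
    with ν hk hν
  set k := ⌊ν⌋₊
  have hν0 : 0 ≤ ν := by linarith
  have hνk : ν ≤ k + 1 := (Nat.lt_floor_add_one ν).le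
  calc ν ^ M * b ^ ν ≤ ((k : ℝ) + 1) ^ M * b ^ (k + 1) := by
        gcongr
        exact_mod_cast rpow_le_rpow_of_exponent_le hb hνk
    _ ≤ (2 ^ (k + 1) : ℝ) ^ M * b ^ (k + 1) := by
        gcongr
        exact_mod_cast (Nat.lt_two_pow_self (n := k + 1)).le
    _ = c ^ (k + 1) := by rw [mul_pow, ← pow_mul, ← pow_mul, mul_comm M]
    _ ≤ k ! := hk
    _ ≤ Gamma (ν + 1) := factorial_floor_le_Gamma_add_one hν

lemma eventually_rpow_div_Gamma_add_one_le {b : ℝ} (hb : 0 ≤ b) (p : ℝ) :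
    ∀ᶠ ν in atTop, b ^ ν / Gamma (ν + 1) ≤ ν ^ (-p) := by
  filter_upwards [eventually_pow_mul_rpow_le_Gamma_add_one ⌈p⌉₊ (le_max_right b 1),
    eventually_ge_atTop 1] with ν hΓ hν
  have hνp : 0 < ν ^ p := rpow_pos_of_pos (by linarith) p
  rw [rpow_neg (by linarith), div_le_iff₀ (Gamma_pos_of_pos (by linarith)), inv_mul_eq_div,
    le_div_iff₀' hνp]
  calc ν ^ p * b ^ ν ≤ ν ^ ⌈p⌉₊ * max b 1 ^ ν := by
        gcongr
        · exact_mod_cast rpow_le_rpow_of_exponent_le hν (Nat.le_ceil p)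
        · exact le_max_left b 1
    _ ≤ Gamma (ν + 1) := hΓ

end Real

lemma besselI_term_le {ν x : ℝ} (hν : 0 ≤ ν) (hx : 0 ≤ x) (n : ℕ) :
    (x / 2) ^ (2 * n) * (x / 2) ^ ν / (n ! * Gamma (n + ν + 1))
      ≤ (x / 2) ^ ν / Gamma (ν + 1) * (((x / 2) ^ 2) ^ n / n !) := by
  calc (x / 2) ^ (2 * n) * (x / 2) ^ ν / (n ! * Gamma (n + ν + 1))
      ≤ (x / 2) ^ (2 * n) * (x / 2) ^ ν / (n ! * Gamma (ν + 1)) := by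
        gcongr
        exact Gamma_add_one_le_Gamma_nat_add_add_one hν n
    _ = (x / 2) ^ ν / Gamma (ν + 1) * (((x / 2) ^ 2) ^ n / n !) := by
        rw [pow_mul]; field_simp

lemma besselI_le_mul_exp {ν x : ℝ} (hν : 0 ≤ ν) (hx : 0 ≤ x) :
    besselI ν x ≤ (x / 2) ^ ν / Gamma (ν + 1) * exp ((x / 2) ^ 2) := by
  have hexp : HasSum (fun n : ℕ => ((x / 2) ^ 2) ^ n / n !) (exp ((x / 2) ^ 2)) := by
    rw [exp_eq_exp_ℝ]; exact NormedSpace.expSeries_div_hasSum_exp _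
  have hdom := hexp.mul_left ((x / 2) ^ ν / Gamma (ν + 1))
  have hterm_nonneg : ∀ n : ℕ,
      0 ≤ (x / 2) ^ (2 * n) * (x / 2) ^ ν / (n ! * Gamma (n + ν + 1)) := fun n => by
    have := Gamma_pos_of_pos (by positivity : (0 : ℝ) < n + ν + 1)
    positivity
  exact hdom.tsum_eq ▸ Summable.tsum_le_tsum (besselI_term_le hν hx)
    (hdom.summable.of_nonneg_of_le hterm_nonneg (besselI_term_le hν hx)) hdom.summable

lemma eventually_besselI_le {x : ℝ} (hx : 0 ≤ x) (p : ℝ) :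
    ∀ᶠ ν in atTop, besselI ν x ≤ exp ((x / 2) ^ 2) * ν ^ (-p) := by
  filter_upwards [eventually_rpow_div_Gamma_add_one_le (by positivity : 0 ≤ x / 2) p,
    eventually_ge_atTop 0] with ν hdecay hν
  calc besselI ν x ≤ (x / 2) ^ ν / Gamma (ν + 1) * exp ((x / 2) ^ 2) := besselI_le_mul_exp hν hx
    _ ≤ exp ((x / 2) ^ 2) * ν ^ (-p) := by rw [mul_comm]; gcongr

def laplaceTransform (u : ℝ → ℝ) (s : ℝ) : ℝ :=
  ∫ t in Ioi 0, exp (-s * t) * u t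

lemma integrableOn_exp_neg_mul_mul {u : ℝ → ℝ} {s C : ℝ} (hs : 0 < s)
    (hmeas : AEStronglyMeasurable u (volume.restrict (Ioi 0)))
    (hbd : ∀ t, 0 < t → |u t| ≤ C) :
    IntegrableOn (fun t => exp (-s * t) * u t) (Ioi 0) := by
  refine ((exp_neg_integrableOn_Ioi 0 hs).mul_const C).mono'
    ((by fun_prop : Continuous fun t => exp (-s * t)).aestronglyMeasurable.mul hmeas) ?_
  filter_upwards [ae_restrict_mem measurableSet_Ioi] with t ht
  rw [norm_mul, Real.norm_of_nonneg (exp_pos _).le]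
  exact mul_le_mul_of_nonneg_left (hbd t ht) (exp_pos _).le

lemma mul_exp_neg_mul_le_laplaceTransform {u : ℝ → ℝ} {s t : ℝ} (hs : 0 ≤ s) (ht : 0 < t)
    (hu : ∀ r, 0 < r → 0 ≤ u r) (hmono : MonotoneOn u (Ioi 0))
    (hint : IntegrableOn (fun r => exp (-s * r) * u r) (Ioi 0)) :
    t * (exp (-s * (2 * t)) * u t) ≤ laplaceTransform u s := by
  have hsub : Ioc t (2 * t) ⊆ Ioi 0 := fun r hr => ht.trans hr.1
  calc t * (exp (-s * (2 * t)) * u t) = ∫ _ in Ioc t (2 * t), exp (-s * (2 * t)) * u t := by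
        rw [setIntegral_const, measureReal_def, Real.volume_Ioc, smul_eq_mul,
          ENNReal.toReal_ofReal (by linarith)]
        ring
    _ ≤ ∫ r in Ioc t (2 * t), exp (-s * r) * u r := by
        refine setIntegral_mono_on (integrableOn_const measure_Ioc_lt_top.ne)
          (hint.mono_set hsub) measurableSet_Ioc fun r hr => ?_
        exact mul_le_mul (exp_le_exp.2 (by nlinarith [hr.2])) (hmono ht (hsub hr) hr.1.le)
          (hu t ht) (exp_pos _).le
    _ ≤ laplaceTransform u s := by
        refine setIntegral_mono_set hint ?_ hsub.eventuallyLE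
        filter_upwards [ae_restrict_mem measurableSet_Ioi] with r hr
        exact mul_nonneg (exp_pos _).le (hu r hr)

lemma sqrt_add_inv_rpow_neg_two_mul_le {a t n : ℝ} (ha : 0 ≤ a) (ht : 0 < t) (hn : 0 ≤ n) :
    √(a + t⁻¹) ^ (-(2 * n)) ≤ t ^ n := by
  have ht' : 0 < t⁻¹ := inv_pos.2 ht
  calc √(a + t⁻¹) ^ (-(2 * n)) = (a + t⁻¹) ^ (-n) := by
        rw [show -(2 * n) = 2 * -n by ring, rpow_mul (sqrt_nonneg _), rpow_two,
          sq_sqrt (by positivity)]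
    _ ≤ t⁻¹ ^ (-n) := rpow_le_rpow_of_nonpos ht' (by linarith) (by linarith)
    _ = t ^ n := by rw [inv_rpow ht.le, rpow_neg ht.le, inv_inv]

/-- If the bounded, monotone absorption probability `u(·, z)` has Laplace transform
`g(s,z) = (1/s) √(πz) e^{-z/2} I_{√(1/4+s)}(z/2)`, then `u(t,z) ≤ cₙ tⁿ` as `t → 0⁺`
for every `n > 0`. -/
theorem absorption_probability_rapidly_vanishing
    (z : ℝ) (hz : 0 < z) (u : ℝ → ℝ)
    (hbd : ∀ t : ℝ, 0 < t → 0 ≤ u t ∧ u t ≤ 1)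
    (hmono : MonotoneOn u (Set.Ioi (0:ℝ)))
    (hlaplace : ∀ s : ℝ, 0 < s →
      (∫ t in Set.Ioi (0:ℝ), Real.exp (-s * t) * u t)
        = (1 / s) * Real.sqrt (Real.pi * z) * Real.exp (-z / 2)
          * besselI (Real.sqrt (1 / 4 + s)) (z / 2)) :
    ∀ n : ℝ, 0 < n → ∃ c : ℝ, 0 < c ∧ ∃ δ : ℝ, 0 < δ ∧
      ∀ t : ℝ, 0 < t → t < δ → u t ≤ c * t ^ n := by
  intro n hn
  set K := √(π * z) * exp (-z / 2)
  have hK : 0 < K := mul_pos (sqrt_pos.2 (by positivity)) (exp_pos _)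
  have hu : ∀ t, 0 < t → u t ≤ exp 2 * K * besselI √(1 / 4 + t⁻¹) (z / 2) := by
    intro t ht
    have hs : 0 < t⁻¹ := inv_pos.2 ht
    have hint := integrableOn_exp_neg_mul_mul hs
      (aemeasurable_restrict_of_monotoneOn measurableSet_Ioi hmono).aestronglyMeasurable
      (C := 1) fun r hr => abs_le.2 ⟨by linarith [(hbd r hr).1], (hbd r hr).2⟩
    have h := mul_exp_neg_mul_le_laplaceTransform hs.le ht (fun r hr => (hbd r hr).1) hmono hint
    rw [laplaceTransform, hlaplace _ hs, show -t⁻¹ * (2 * t) = -2 by field_simp, one_div, inv_inv,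
      mul_assoc t, mul_assoc t, mul_le_mul_iff_right₀ ht, exp_neg, inv_mul_le_iff₀ (exp_pos _)] at h
    linarith
  have hν : Tendsto (fun t : ℝ => √(1 / 4 + t⁻¹)) (𝓝[>] 0) atTop :=
    tendsto_sqrt_atTop.comp (tendsto_atTop_add_const_left _ _ tendsto_inv_nhdsGT_zero)
  obtain ⟨δ, hδ, hdecay⟩ := (nhdsGT_basis (0 : ℝ)).eventually_iff.1
    (hν.eventually (eventually_besselI_le (by positivity : 0 ≤ z / 2) (2 * n)))
  refine ⟨exp 2 * K * exp ((z / 2 / 2) ^ 2), by positivity, δ, hδ, fun t ht htδ => ?_⟩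
  calc u t ≤ exp 2 * K * besselI √(1 / 4 + t⁻¹) (z / 2) := hu t ht
    _ ≤ exp 2 * K * (exp ((z / 2 / 2) ^ 2) * √(1 / 4 + t⁻¹) ^ (-(2 * n))) := by
        gcongr
        exact hdecay ⟨ht, htδ⟩
    _ ≤ exp 2 * K * (exp ((z / 2 / 2) ^ 2) * t ^ n) := by
        gcongr
        exact sqrt_add_inv_rpow_neg_two_mul_le (by norm_num) ht hn.le
    _ = exp 2 * K * exp ((z / 2 / 2) ^ 2) * t ^ n := by ring
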